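/- Let α > 0. (i) If f ∈ Λ_α(X) with constant C, then |⟨f, ψ^l_k⟩| ≤ C·2^{−l(α+1/2)} for every Haar function ψ^l_k (0 ≤ l ≤ L−1, 1 ≤ k ≤ 2^l). (ii) Conversely, if |⟨f, ψ^l_k⟩| ≤ C·2^{−l(α+1/2)} for every Haar function, then f ∈ Λ_α(X) with a constant C' depending only on C and α. -/
import Mathlib


open scoped Classical
open Finset

/-- A dyadic balanced partition tree of depth `L` on a finite set `X` with `|X| = 2^L`.
Node indices `k` are 0-based: level `l` has the nodes `k = 0, …, 2^l − 1`, and the two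
children of `node l k` are `node (l+1) (2k)` and `node (l+1) (2k+1)`. -/
structure DyadicTree (X : Type) [Fintype X] (L : ℕ) where
  node : ℕ → ℕ → Finset X
  node_zero : node 0 0 = Finset.univ
  disj : ∀ l ≤ L, ∀ k < 2 ^ l, ∀ k' < 2 ^ l, k ≠ k' → Disjoint (node l k) (node l k')
  cover : ∀ l ≤ L, ∀ x : X, ∃ k < 2 ^ l, x ∈ node l k
  children : ∀ l < L, ∀ k < 2 ^ l,
    node l k = node (l + 1) (2 * k) ∪ node (l + 1) (2 * k + 1)
  card_node : ∀ l ≤ L, ∀ k < 2 ^ l, (node l k).card = 2 ^ (L - l)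

namespace DyadicTree

variable {X : Type} [Fintype X] {L : ℕ}

/-- `x` and `x'` lie in a common level-`l` node. -/
def sameNode (T : DyadicTree X L) (l : ℕ) (x x' : X) : Prop :=
  ∃ k < 2 ^ l, x ∈ T.node l k ∧ x' ∈ T.node l k

/-- The level-`l` node containing `x`, as a `Finset`. -/
noncomputable def cell (T : DyadicTree X L) (l : ℕ) (x : X) : Finset X :=
  Finset.univ.filter fun x' => T.sameNode l x x'

/-- The averaging (scaling) operator `P^l f(x)`: the average of `f` over the level-`l`
node containing `x`. -/
noncomputable def avg (T : DyadicTree X L) (l : ℕ) (f : X → ℝ) (x : X) : ℝ :=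
  (∑ y ∈ T.cell l x, f y) / (T.cell l x).card

/-- The difference (wavelet) operator `Q^l f = P^{l+1} f − P^l f`. -/
noncomputable def Qop (T : DyadicTree X L) (l : ℕ) (f : X → ℝ) (x : X) : ℝ :=
  T.avg (l + 1) f x - T.avg l f x

/-- The tree distance `ρ(x,x')`: `0` if `x = x'`, else `2^{−l*}` where `l*` is the largest
level `l ≤ L` at which `x` and `x'` lie in a common node. -/
noncomputable def rho (T : DyadicTree X L) (x x' : X) : ℝ :=
  if x = x' then 0
  else (2 : ℝ) ^ (-((Nat.findGreatest (fun l => T.sameNode l x x') L : ℕ) : ℝ))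

/-- `f ∈ Λ_β(X)` with constant `C`. -/
def Holder (T : DyadicTree X L) (β C : ℝ) (f : X → ℝ) : Prop :=
  ∀ x x' : X, |f x - f x'| ≤ C * T.rho x x' ^ β

/-- The Haar function `ψ^l_k = 2^{l/2}(χ_{child₁} − χ_{child₂})` of the node `X^l_k`. -/
noncomputable def haar (T : DyadicTree X L) (l k : ℕ) : X → ℝ := fun x =>
  (2 : ℝ) ^ ((l : ℝ) / 2) *
    ((if x ∈ T.node (l + 1) (2 * k) then (1 : ℝ) else 0) -
      (if x ∈ T.node (l + 1) (2 * k + 1) then (1 : ℝ) else 0))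

/-- The normalized inner product `⟨f,g⟩ = (1/|X|) Σ_x f(x) g(x)`. -/
noncomputable def ip (_T : DyadicTree X L) (f g : X → ℝ) : ℝ :=
  (∑ x, f x * g x) / (Fintype.card X : ℝ)

/-- The Hölder norm `‖f‖_{Λ_β(X)} = max_{l<L, k<2^l} |⟨f,ψ^l_k⟩| / 2^{−l(β+1/2)}`. -/
noncomputable def holderNorm (T : DyadicTree X L) (β : ℝ) (f : X → ℝ) : ℝ :=
  sSup {r : ℝ | ∃ l < L, ∃ k < 2 ^ l,
    r = |T.ip f (T.haar l k)| / (2 : ℝ) ^ (-(l : ℝ) * (β + 1 / 2))}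

end DyadicTree

/-- The hierarchical paraproduct approximation `Ã_L(f) = Σ_{l<L} A'(P^l f)·Q^l f`. -/
noncomputable def Atilde1 {X : Type} [Fintype X] {L : ℕ} (T : DyadicTree X L)
    (A : ℝ → ℝ) (f : X → ℝ) : X → ℝ := fun x =>
  ∑ l ∈ Finset.range L, deriv A (T.avg l f x) * T.Qop l f x

/-- The hierarchical paraproduct residual `Δ_L(A,f) = A∘f − Ã_L(f)`. -/
noncomputable def residual1 {X : Type} [Fintype X] {L : ℕ} (T : DyadicTree X L)
    (A : ℝ → ℝ) (f : X → ℝ) : X → ℝ := fun x =>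
  A (f x) - Atilde1 T A f x

section Tensor

variable {X Y : Type} [Fintype X] [Fintype Y] {L S : ℕ}

/-- The tensor averaging operator `P^lP^s f(x,y)`: the average of `f` over `N × M`
where `N` is the level-`l` node containing `x` and `M` the level-`s` node containing `y`. -/
noncomputable def PP (TX : DyadicTree X L) (TY : DyadicTree Y S) (l s : ℕ)
    (f : X × Y → ℝ) (p : X × Y) : ℝ :=
  (∑ q ∈ (TX.cell l p.1) ×ˢ (TY.cell s p.2), f q) /
    ((TX.cell l p.1).card * (TY.cell s p.2).card)

/-- `Q^lP^s f = P^{l+1}P^s f − P^lP^s f`. -/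
noncomputable def QP (TX : DyadicTree X L) (TY : DyadicTree Y S) (l s : ℕ)
    (f : X × Y → ℝ) (p : X × Y) : ℝ :=
  PP TX TY (l + 1) s f p - PP TX TY l s f p

/-- `P^lQ^s f = P^lP^{s+1} f − P^lP^s f`. -/
noncomputable def PQ (TX : DyadicTree X L) (TY : DyadicTree Y S) (l s : ℕ)
    (f : X × Y → ℝ) (p : X × Y) : ℝ :=
  PP TX TY l (s + 1) f p - PP TX TY l s f p

/-- `Q^lQ^s f = P^{l+1}P^{s+1} f − P^{l+1}P^s f − P^lP^{s+1} f + P^lP^s f`. -/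
noncomputable def QQ (TX : DyadicTree X L) (TY : DyadicTree Y S) (l s : ℕ)
    (f : X × Y → ℝ) (p : X × Y) : ℝ :=
  PP TX TY (l + 1) (s + 1) f p - PP TX TY (l + 1) s f p - PP TX TY l (s + 1) f p
    + PP TX TY l s f p

/-- `f ∈ Λ_β(X×Y)` with constant `C`: the rectangular (mixed-difference) condition
together with the two one-variable Hölder conditions. -/
def HolderRect (TX : DyadicTree X L) (TY : DyadicTree Y S) (β C : ℝ)
    (f : X × Y → ℝ) : Prop :=
  (∀ x x' : X, ∀ y y' : Y,
      |f (x, y) - f (x', y) - f (x, y') + f (x', y')| ≤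
        C * TX.rho x x' ^ β * TY.rho y y' ^ β) ∧
  (∀ x x' : X, ∀ y : Y, |f (x, y) - f (x', y)| ≤ C * TX.rho x x' ^ β) ∧
  (∀ x : X, ∀ y y' : Y, |f (x, y) - f (x, y')| ≤ C * TY.rho y y' ^ β)

/-- The tensor Haar function `(ψ^l_k ⊗ ψ^s_r)(x,y) = ψ^l_k(x) ψ^s_r(y)`. -/
noncomputable def tensorHaar (TX : DyadicTree X L) (TY : DyadicTree Y S)
    (l k s r : ℕ) : X × Y → ℝ := fun p => TX.haar l k p.1 * TY.haar s r p.2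

/-- `⟨f,g⟩ = (1/(|X||Y|)) Σ_{(x,y)} f(x,y) g(x,y)`. -/
noncomputable def ip2 (f g : X × Y → ℝ) : ℝ :=
  (∑ p : X × Y, f p * g p) / ((Fintype.card X : ℝ) * (Fintype.card Y : ℝ))

/-- The tensor Hölder norm
`‖f‖_{Λ_β(X×Y)} = max_{l,s,k,r} |⟨f, ψ^l_k ⊗ ψ^s_r⟩| / 2^{−(l+s)(β+1/2)}`. -/
noncomputable def holderNorm2 (TX : DyadicTree X L) (TY : DyadicTree Y S)
    (β : ℝ) (f : X × Y → ℝ) : ℝ :=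
  sSup {u : ℝ | ∃ l < L, ∃ s < S, ∃ k < 2 ^ l, ∃ r < 2 ^ s,
    u = |ip2 f (tensorHaar TX TY l k s r)| /
      (2 : ℝ) ^ (-((l : ℝ) + (s : ℝ)) * (β + 1 / 2))}

/-- The hierarchical tensor paraproduct approximation
`Ã_{L,S}(f) = Σ_{l<L} Σ_{s<S} [A'(P^lP^s f)·Q^lQ^s f + A''(P^lP^s f)·(Q^lP^s f)·(P^lQ^s f)]`. -/
noncomputable def Atilde2 (TX : DyadicTree X L) (TY : DyadicTree Y S)
    (A : ℝ → ℝ) (f : X × Y → ℝ) : X × Y → ℝ := fun p =>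
  ∑ l ∈ Finset.range L, ∑ s ∈ Finset.range S,
    (deriv A (PP TX TY l s f p) * QQ TX TY l s f p +
      deriv (deriv A) (PP TX TY l s f p) * QP TX TY l s f p * PQ TX TY l s f p)

/-- The hierarchical tensor paraproduct residual `Δ_{L,S}(A,f) = A∘f − Ã_{L,S}(f)`. -/
noncomputable def residual2 (TX : DyadicTree X L) (TY : DyadicTree Y S)
    (A : ℝ → ℝ) (f : X × Y → ℝ) : X × Y → ℝ := fun p =>
  A (f p) - Atilde2 TX TY A f p

end Tensor

section Helpers

namespace DyadicTree

variable {X : Type} [Fintype X] {L : ℕ} (T : DyadicTree X L)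

include T in
lemma card_X : (Fintype.card X : ℕ) = 2 ^ L := by
  have h := T.card_node 0 (Nat.zero_le L) 0 (by norm_num)
  rw [T.node_zero] at h
  simpa using h

lemma node_unique {l k k' : ℕ} (hl : l ≤ L) (hk : k < 2 ^ l) (hk' : k' < 2 ^ l)
    {x : X} (hx : x ∈ T.node l k) (hx' : x ∈ T.node l k') : k = k' := by
  by_contra h
  exact Finset.disjoint_left.mp (T.disj l hl k hk k' hk' h) hx hx'

lemma cell_eq_node {l k : ℕ} (hl : l ≤ L) (hk : k < 2 ^ l) {x : X}
    (hx : x ∈ T.node l k) : T.cell l x = T.node l k := by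
  ext y
  simp only [cell, Finset.mem_filter, Finset.mem_univ, true_and]
  constructor
  · rintro ⟨k', hk', hxk', hyk'⟩
    have : k' = k := T.node_unique hl hk' hk hxk' hx
    subst this; exact hyk'
  · intro hy; exact ⟨k, hk, hx, hy⟩

lemma card_cell {l : ℕ} (hl : l ≤ L) (x : X) : (T.cell l x).card = 2 ^ (L - l) := by
  obtain ⟨k, hk, hx⟩ := T.cover l hl x
  rw [T.cell_eq_node hl hk hx]
  exact T.card_node l hl k hk

lemma cell_zero (x : X) : T.cell 0 x = Finset.univ := by
  have h0 : (0 : ℕ) < 2 ^ 0 := by norm_num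
  have hx : x ∈ T.node 0 0 := by rw [T.node_zero]; exact Finset.mem_univ x
  rw [T.cell_eq_node (Nat.zero_le L) h0 hx, T.node_zero]

lemma mem_cell_self {l : ℕ} (hl : l ≤ L) (x : X) : x ∈ T.cell l x := by
  obtain ⟨k, hk, hx⟩ := T.cover l hl x
  rw [T.cell_eq_node hl hk hx]; exact hx

lemma cell_L (x : X) : T.cell L x = {x} := by
  have h1 : (T.cell L x).card = 1 := by simpa using T.card_cell le_rfl x
  obtain ⟨a, ha⟩ := Finset.card_eq_one.mp h1
  have := T.mem_cell_self le_rfl x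
  rw [ha] at this ⊢
  rw [Finset.mem_singleton] at this
  rw [this]

lemma avg_L (f : X → ℝ) (x : X) : T.avg L f x = f x := by
  rw [avg, cell_L]; simp

lemma sameNode_succ_down {l : ℕ} (hl : l < L) {x x' : X}
    (h : T.sameNode (l + 1) x x') : T.sameNode l x x' := by
  obtain ⟨j, hj, hx, hx'⟩ := h
  obtain ⟨k, hk, hxk⟩ := T.cover l hl.le x
  have hch := T.children l hl k hk
  have h2k : 2 * k < 2 ^ (l + 1) := by rw [pow_succ]; omega
  have h2k1 : 2 * k + 1 < 2 ^ (l + 1) := by rw [pow_succ]; omega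
  have hx2 : x ∈ T.node (l + 1) (2 * k) ∪ T.node (l + 1) (2 * k + 1) := hch ▸ hxk
  refine ⟨k, hk, hxk, ?_⟩
  rcases Finset.mem_union.mp hx2 with h1 | h1
  · have : j = 2 * k := T.node_unique hl hj h2k hx h1
    subst this
    rw [hch]; exact Finset.mem_union_left _ hx'
  · have : j = 2 * k + 1 := T.node_unique hl hj h2k1 hx h1
    subst this
    rw [hch]; exact Finset.mem_union_right _ hx'

lemma sameNode_down {l m : ℕ} (hlm : l ≤ m) (hm : m ≤ L) {x x' : X}
    (h : T.sameNode m x x') : T.sameNode l x x' := by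
  induction m with
  | zero => have hl0 : l = 0 := by omega
            subst hl0; exact h
  | succ n ih =>
    rcases Nat.lt_or_ge l (n + 1) with hl | hl
    · exact ih (by omega) (by omega) (T.sameNode_succ_down (by omega) h)
    · have : l = n + 1 := by omega
      subst this; exact h

lemma sameNode_zero (x x' : X) : T.sameNode 0 x x' := by
  refine ⟨0, by norm_num, ?_, ?_⟩ <;> · rw [T.node_zero]; exact Finset.mem_univ _

lemma cell_congr {l : ℕ} (hl : l ≤ L) {x x' : X} (h : T.sameNode l x x') :
    T.cell l x = T.cell l x' := by
  obtain ⟨k, hk, hx, hx'⟩ := h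
  rw [T.cell_eq_node hl hk hx, T.cell_eq_node hl hk hx']

end DyadicTree

end Helpers

section Core

namespace DyadicTree

variable {X : Type} [Fintype X] {L : ℕ} (T : DyadicTree X L)

lemma two_rpow_half_sq (l : ℕ) :
    (2:ℝ) ^ ((l:ℝ)/2) * (2:ℝ) ^ ((l:ℝ)/2) = (2:ℝ) ^ l := by
  rw [← Real.rpow_add two_pos, ← Real.rpow_natCast 2 l]
  norm_num

lemma sum_node_split {l k : ℕ} (hl : l < L) (hk : k < 2 ^ l) (f : X → ℝ) :
    ∑ y ∈ T.node l k, f y =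
      (∑ y ∈ T.node (l + 1) (2 * k), f y) + ∑ y ∈ T.node (l + 1) (2 * k + 1), f y := by
  have h2k : 2 * k < 2 ^ (l + 1) := by rw [pow_succ]; omega
  have h2k1 : 2 * k + 1 < 2 ^ (l + 1) := by rw [pow_succ]; omega
  rw [T.children l hl k hk]
  exact Finset.sum_union (T.disj (l + 1) hl (2 * k) h2k (2 * k + 1) h2k1 (by omega))

lemma ip_haar {l k : ℕ} (hl : l < L) (hk : k < 2 ^ l) (f : X → ℝ) :
    T.ip f (T.haar l k) =
      (2:ℝ) ^ ((l:ℝ)/2) *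
        ((∑ y ∈ T.node (l + 1) (2 * k), f y) - ∑ y ∈ T.node (l + 1) (2 * k + 1), f y)
        / (2:ℝ) ^ L := by
  have hcard : ((Fintype.card X : ℝ)) = (2:ℝ) ^ L := by exact_mod_cast T.card_X
  have h1 : ∀ s : Finset X, (∑ x, f x * (if x ∈ s then (1:ℝ) else 0)) = ∑ x ∈ s, f x := by
    intro s
    simp [mul_ite, mul_one, mul_zero, Finset.sum_ite_mem]
  rw [ip, hcard]
  congr 1
  have key : ∀ x : X, f x * T.haar l k x =
      (2:ℝ) ^ ((l:ℝ)/2) *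
        (f x * (if x ∈ T.node (l + 1) (2 * k) then (1:ℝ) else 0) -
         f x * (if x ∈ T.node (l + 1) (2 * k + 1) then (1:ℝ) else 0)) := by
    intro x; simp only [haar]; ring
  rw [Finset.sum_congr rfl fun x _ => key x, ← Finset.mul_sum, Finset.sum_sub_distrib,
    h1, h1]

lemma haar_abs_le (l k : ℕ) (x : X) : |T.haar l k x| ≤ (2:ℝ) ^ ((l:ℝ)/2) := by
  have hpos : (0:ℝ) < (2:ℝ) ^ ((l:ℝ)/2) := Real.rpow_pos_of_pos two_pos _
  rw [haar, abs_mul, abs_of_pos hpos]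
  nth_rewrite 2 [← mul_one ((2:ℝ) ^ ((l:ℝ)/2))]
  apply mul_le_mul_of_nonneg_left _ hpos.le
  split_ifs <;> norm_num

lemma qop_eq {l k : ℕ} (hl : l < L) (hk : k < 2 ^ l) {x : X} (hx : x ∈ T.node l k)
    (f : X → ℝ) : T.Qop l f x = T.ip f (T.haar l k) * T.haar l k x := by
  have h2k : 2 * k < 2 ^ (l + 1) := by rw [pow_succ]; omega
  have h2k1 : 2 * k + 1 < 2 ^ (l + 1) := by rw [pow_succ]; omega
  have hd : Disjoint (T.node (l + 1) (2 * k)) (T.node (l + 1) (2 * k + 1)) :=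
    T.disj (l + 1) hl (2 * k) h2k (2 * k + 1) h2k1 (by omega)
  set S1 := ∑ y ∈ T.node (l + 1) (2 * k), f y with hS1
  set S2 := ∑ y ∈ T.node (l + 1) (2 * k + 1), f y with hS2
  set a := (2:ℝ) ^ ((l:ℝ)/2) with ha
  have ha2 : a * a = (2:ℝ) ^ l := two_rpow_half_sq l
  set p := (2:ℝ) ^ (L - (l + 1)) with hp
  have hp0 : p ≠ 0 := by positivity
  have hcl : ((T.cell l x).card : ℝ) = 2 * p := by
    rw [T.card_cell hl.le x]
    push_cast
    rw [hp, ← pow_succ']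
    congr 1
    omega
  have hcelll : T.cell l x = T.node l k := T.cell_eq_node hl.le hk hx
  have h2L : (2:ℝ) ^ L = (2:ℝ) ^ l * (2 * p) := by
    rw [hp, ← pow_succ']
    rw [← pow_add]
    congr 1
    omega
  have hsplit : ∑ y ∈ T.node l k, f y = S1 + S2 := T.sum_node_split hl hk f
  have hxu : x ∈ T.node (l + 1) (2 * k) ∪ T.node (l + 1) (2 * k + 1) :=
    (T.children l hl k hk) ▸ hx
  rw [Qop, avg, avg, hcl, hcelll, hsplit, T.ip_haar hl hk f, ← hS1, ← hS2, ← ha]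
  rcases Finset.mem_union.mp hxu with h1 | h1
  · have hx2 : x ∉ T.node (l + 1) (2 * k + 1) := Finset.disjoint_left.mp hd h1
    have hcell1 : T.cell (l + 1) x = T.node (l + 1) (2 * k) := T.cell_eq_node hl h2k h1
    have hc1 : ((T.cell (l + 1) x).card : ℝ) = p := by
      rw [T.card_cell hl x]; push_cast; rw [hp]
    rw [hcell1] at hc1
    rw [hcell1, hc1, ← hS1, haar, if_pos h1, if_neg hx2, h2L, ← ha]
    have hl0 : (2:ℝ) ^ l ≠ 0 := by positivity
    have hrw : a * (S1 - S2) / (2 ^ l * (2 * p)) * (a * (1 - 0)) =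
        a * a * (S1 - S2) / (2 ^ l * (2 * p)) := by ring
    rw [hrw, ha2]
    field_simp
    ring
  · have hx2 : x ∉ T.node (l + 1) (2 * k) := Finset.disjoint_right.mp hd h1
    have hcell1 : T.cell (l + 1) x = T.node (l + 1) (2 * k + 1) := T.cell_eq_node hl h2k1 h1
    have hc1 : ((T.cell (l + 1) x).card : ℝ) = p := by
      rw [T.card_cell hl x]; push_cast; rw [hp]
    rw [hcell1] at hc1
    rw [hcell1, hc1, ← hS2, haar, if_neg hx2, if_pos h1, h2L, ← ha]
    have hl0 : (2:ℝ) ^ l ≠ 0 := by positivity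
    have hrw : a * (S1 - S2) / (2 ^ l * (2 * p)) * (a * (0 - 1)) =
        -(a * a) * (S1 - S2) / (2 ^ l * (2 * p)) := by ring
    rw [hrw, ha2]
    field_simp
    ring

end DyadicTree

end Core

section Parts

namespace DyadicTree

variable {X : Type} [Fintype X] {L : ℕ} (T : DyadicTree X L)

lemma holder_coeff {α C : ℝ} (hα : 0 < α) {f : X → ℝ} (hf : T.Holder α C f)
    {l k : ℕ} (hl : l < L) (hk : k < 2 ^ l) :
    |T.ip f (T.haar l k)| ≤ C * (2:ℝ) ^ (-(l:ℝ) * (α + 1 / 2)) := by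
  have h2k : 2 * k < 2 ^ (l + 1) := by rw [pow_succ]; omega
  have h2k1 : 2 * k + 1 < 2 ^ (l + 1) := by rw [pow_succ]; omega
  have hd := T.disj (l + 1) hl (2 * k) h2k (2 * k + 1) h2k1 (by omega)
  set N1 := T.node (l + 1) (2 * k) with hN1
  set N2 := T.node (l + 1) (2 * k + 1) with hN2
  set M := ((2:ℕ) ^ (L - (l + 1)) : ℕ) with hM
  have hc1 : N1.card = M := T.card_node (l + 1) hl (2 * k) h2k
  have hc2 : N2.card = M := T.card_node (l + 1) hl (2 * k + 1) h2k1
  have hMpos : 0 < (M:ℝ) := by rw [hM]; positivity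
  have hne1 : N1.Nonempty := Finset.card_pos.mp (by rw [hc1, hM]; positivity)
  have hne2 : N2.Nonempty := Finset.card_pos.mp (by rw [hc2, hM]; positivity)
  have hpair : ∀ x ∈ N1, ∀ x' ∈ N2, T.sameNode l x x' ∧ x ≠ x' := by
    intro x hx x' hx'
    have hch := T.children l hl k hk
    refine ⟨⟨k, hk, ?_, ?_⟩, ?_⟩
    · rw [hch]; exact Finset.mem_union_left _ hx
    · rw [hch]; exact Finset.mem_union_right _ hx'
    · rintro rfl; exact Finset.disjoint_left.mp hd hx hx'
  set B := (2:ℝ) ^ (-(l:ℝ) * α) with hB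
  have hrho : ∀ x ∈ N1, ∀ x' ∈ N2, T.rho x x' ^ α ≤ B := by
    intro x hx x' hx'
    obtain ⟨hsn, hne⟩ := hpair x hx x' hx'
    have hlm : l ≤ Nat.findGreatest (fun j => T.sameNode j x x') L :=
      Nat.le_findGreatest hl.le hsn
    rw [rho, if_neg hne, ← Real.rpow_mul (by norm_num : (0:ℝ) ≤ 2), hB]
    apply (Real.rpow_le_rpow_left_iff one_lt_two).mpr
    have hcast : (l:ℝ) ≤ ((Nat.findGreatest (fun j => T.sameNode j x x') L : ℕ) : ℝ) := by
      exact_mod_cast hlm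
    nlinarith
  have hC : 0 ≤ C := by
    obtain ⟨x0, hx0⟩ := hne1
    obtain ⟨x1, hx1⟩ := hne2
    obtain ⟨_, hne⟩ := hpair x0 hx0 x1 hx1
    have h1 := hf x0 x1
    have h2 : 0 < T.rho x0 x1 ^ α := by
      rw [rho, if_neg hne]
      exact Real.rpow_pos_of_pos (Real.rpow_pos_of_pos two_pos _) _
    nlinarith [abs_nonneg (f x0 - f x1)]
  have hbound : ∀ x ∈ N1, ∀ x' ∈ N2, |f x - f x'| ≤ C * B := fun x hx x' hx' =>
    le_trans (hf x x') (mul_le_mul_of_nonneg_left (hrho x hx x' hx') hC)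
  set S1 := ∑ y ∈ N1, f y with hS1
  set S2 := ∑ y ∈ N2, f y with hS2
  have key : ∑ x ∈ N1, ∑ x' ∈ N2, (f x - f x') = (M:ℝ) * (S1 - S2) := by
    have inner : ∀ x : X, ∑ x' ∈ N2, (f x - f x') = (M:ℝ) * f x - S2 := by
      intro x
      rw [Finset.sum_sub_distrib, Finset.sum_const, hc2, nsmul_eq_mul, hS2]
    rw [Finset.sum_congr rfl fun x _ => inner x, Finset.sum_sub_distrib,
      Finset.sum_const, ← Finset.mul_sum, hc1, nsmul_eq_mul, ← hS1]
    ring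
  have habs : |S1 - S2| ≤ (M:ℝ) * (C * B) := by
    have h1 : |∑ x ∈ N1, ∑ x' ∈ N2, (f x - f x')| ≤ (M:ℝ) * ((M:ℝ) * (C * B)) := by
      calc |∑ x ∈ N1, ∑ x' ∈ N2, (f x - f x')|
          ≤ ∑ x ∈ N1, |∑ x' ∈ N2, (f x - f x')| := Finset.abs_sum_le_sum_abs _ _
        _ ≤ ∑ _x ∈ N1, ((M:ℝ) * (C * B)) := by
            apply Finset.sum_le_sum
            intro x hx
            calc |∑ x' ∈ N2, (f x - f x')| ≤ ∑ x' ∈ N2, |f x - f x'| :=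
                Finset.abs_sum_le_sum_abs _ _
              _ ≤ ∑ _x' ∈ N2, (C * B) := Finset.sum_le_sum fun x' hx' => hbound x hx x' hx'
              _ = (M:ℝ) * (C * B) := by rw [Finset.sum_const, hc2, nsmul_eq_mul]
        _ = (M:ℝ) * ((M:ℝ) * (C * B)) := by rw [Finset.sum_const, hc1, nsmul_eq_mul]
    rw [key, abs_mul, abs_of_pos hMpos] at h1
    exact le_of_mul_le_mul_left h1 hMpos
  rw [T.ip_haar hl hk f, ← hS1, ← hS2]
  have hapos : (0:ℝ) < (2:ℝ) ^ ((l:ℝ)/2) := Real.rpow_pos_of_pos two_pos _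
  have hLpos : (0:ℝ) < (2:ℝ) ^ L := by positivity
  rw [abs_div, abs_mul, abs_of_pos hapos, abs_of_pos hLpos]
  have step : (2:ℝ) ^ ((l:ℝ)/2) * |S1 - S2| / (2:ℝ) ^ L ≤
      (2:ℝ) ^ ((l:ℝ)/2) * ((M:ℝ) * (C * B)) / (2:ℝ) ^ L := by gcongr
  refine le_trans step ?_
  have hMr : (M:ℝ) = (2:ℝ) ^ ((L:ℝ) - (l:ℝ) - 1) := by
    have h1 : (M:ℝ) = (2:ℝ) ^ (L - (l + 1)) := by rw [hM]; push_cast; ring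
    rw [h1, ← Real.rpow_natCast 2 (L - (l + 1))]
    congr 1
    rw [Nat.cast_sub hl]
    push_cast
    ring
  have h2Lr : ((2:ℝ) ^ L : ℝ) = (2:ℝ) ^ ((L:ℝ)) := (Real.rpow_natCast 2 L).symm
  rw [hMr, h2Lr, hB]
  have e2 : (2:ℝ) ^ ((l:ℝ)/2) * (2:ℝ) ^ ((L:ℝ) - (l:ℝ) - 1) * (2:ℝ) ^ (-(l:ℝ) * α) /
      (2:ℝ) ^ ((L:ℝ)) =
      (2:ℝ) ^ ((l:ℝ)/2 + ((L:ℝ) - (l:ℝ) - 1) + -(l:ℝ) * α - (L:ℝ)) := by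
    rw [← Real.rpow_add two_pos, ← Real.rpow_add two_pos, ← Real.rpow_sub two_pos]
  have e1 : (2:ℝ) ^ ((l:ℝ)/2) * ((2:ℝ) ^ ((L:ℝ) - (l:ℝ) - 1) * (C * (2:ℝ) ^ (-(l:ℝ) * α))) /
      (2:ℝ) ^ ((L:ℝ)) =
      C * ((2:ℝ) ^ ((l:ℝ)/2) * (2:ℝ) ^ ((L:ℝ) - (l:ℝ) - 1) * (2:ℝ) ^ (-(l:ℝ) * α) /
        (2:ℝ) ^ ((L:ℝ))) := by ring
  rw [e1, e2]
  apply mul_le_mul_of_nonneg_left _ hC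
  rw [Real.rpow_le_rpow_left_iff one_lt_two]
  nlinarith [hα.le]

lemma coeff_holder {α C : ℝ} (hα : 0 < α) {f : X → ℝ}
    (hf : ∀ l < L, ∀ k < 2 ^ l,
      |T.ip f (T.haar l k)| ≤ C * (2:ℝ) ^ (-(l:ℝ) * (α + 1 / 2))) :
    T.Holder α (2 * max C 0 / (1 - (2:ℝ) ^ (-α))) f := by
  set D := max C 0 with hD
  have hD0 : 0 ≤ D := le_max_right C 0
  set r := (2:ℝ) ^ (-α) with hr
  have hr0 : 0 < r := Real.rpow_pos_of_pos two_pos _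
  have hr1 : r < 1 := Real.rpow_lt_one_of_one_lt_of_neg one_lt_two (by linarith)
  have h1r : (0:ℝ) < 1 - r := by linarith
  intro x x'
  by_cases hxe : x = x'
  · subst hxe
    simp [rho, Real.zero_rpow hα.ne']
  · set m := Nat.findGreatest (fun j => T.sameNode j x x') L with hm
    have hmL : m ≤ L := Nat.findGreatest_le L
    have hsm : T.sameNode m x x' :=
      Nat.findGreatest_spec (P := fun j => T.sameNode j x x') (Nat.zero_le L)
        (T.sameNode_zero x x')
    have hrpow : ∀ n : ℕ, (2:ℝ) ^ (-(n:ℝ) * α) = r ^ n := by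
      intro n
      rw [hr, ← Real.rpow_natCast ((2:ℝ) ^ (-α)) n, ← Real.rpow_mul (by norm_num : (0:ℝ) ≤ 2)]
      ring_nf
    have hQ : ∀ l < L, ∀ y : X, |T.Qop l f y| ≤ D * r ^ l := by
      intro l hl y
      obtain ⟨k, hk, hy⟩ := T.cover l hl.le y
      rw [T.qop_eq hl hk hy f, abs_mul]
      have hb1 : |T.ip f (T.haar l k)| ≤ D * (2:ℝ) ^ (-(l:ℝ) * (α + 1 / 2)) :=
        le_trans (hf l hl k hk)
          (mul_le_mul_of_nonneg_right (le_max_left C 0) (by positivity))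
      have hb2 := T.haar_abs_le l k y
      calc |T.ip f (T.haar l k)| * |T.haar l k y|
          ≤ D * (2:ℝ) ^ (-(l:ℝ) * (α + 1 / 2)) * ((2:ℝ) ^ ((l:ℝ)/2)) :=
            mul_le_mul hb1 hb2 (abs_nonneg _) (by positivity)
        _ = D * r ^ l := by
            rw [mul_assoc, ← Real.rpow_add two_pos, ← hrpow l]
            congr 1
            ring
    have tele : ∀ y : X, f y - T.avg 0 f y = ∑ l ∈ Finset.range L, T.Qop l f y := by
      intro y
      have h := Finset.sum_range_sub (fun l => T.avg l f y) L
      simp only [Qop]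
      rw [h, T.avg_L]
    have h0 : T.avg 0 f x = T.avg 0 f x' := by rw [avg, avg, T.cell_zero, T.cell_zero]
    have heq : f x - f x' = ∑ l ∈ Finset.Ico m L, (T.Qop l f x - T.Qop l f x') := by
      have e1 : f x - f x' = ∑ l ∈ Finset.range L, (T.Qop l f x - T.Qop l f x') := by
        rw [Finset.sum_sub_distrib, ← tele x, ← tele x', h0]
        ring
      rw [e1, ← Finset.sum_range_add_sum_Ico _ hmL]
      have hz : ∑ l ∈ Finset.range m, (T.Qop l f x - T.Qop l f x') = 0 := by
        apply Finset.sum_eq_zero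
        intro l hlm
        rw [Finset.mem_range] at hlm
        have hs1 : T.sameNode (l + 1) x x' := T.sameNode_down hlm hmL hsm
        have hs0 : T.sameNode l x x' := T.sameNode_down (by omega) hmL hsm
        rw [Qop, Qop, avg, avg, avg, avg, T.cell_congr (by omega) hs1,
          T.cell_congr (by omega) hs0]
        ring
      rw [hz, zero_add]
    have hsum : |f x - f x'| ≤ 2 * D * (r ^ m / (1 - r)) := by
      rw [heq]
      calc |∑ l ∈ Finset.Ico m L, (T.Qop l f x - T.Qop l f x')|
          ≤ ∑ l ∈ Finset.Ico m L, |T.Qop l f x - T.Qop l f x'| :=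
            Finset.abs_sum_le_sum_abs _ _
        _ ≤ ∑ l ∈ Finset.Ico m L, 2 * D * r ^ l := by
            apply Finset.sum_le_sum
            intro l hlI
            rw [Finset.mem_Ico] at hlI
            have h1 := hQ l hlI.2 x
            have h2 := hQ l hlI.2 x'
            calc |T.Qop l f x - T.Qop l f x'| ≤ |T.Qop l f x| + |T.Qop l f x'| :=
                abs_sub _ _
              _ ≤ 2 * D * r ^ l := by linarith
        _ = 2 * D * ∑ l ∈ Finset.Ico m L, r ^ l := by rw [Finset.mul_sum]
        _ ≤ 2 * D * (r ^ m / (1 - r)) := by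
            apply mul_le_mul_of_nonneg_left _ (by linarith)
            rw [geom_sum_Ico hr1.ne hmL]
            have hEq : (r ^ L - r ^ m) / (r - 1) = (r ^ m - r ^ L) / (1 - r) := by
              rw [div_eq_div_iff (by linarith) (by linarith)]
              ring
            rw [hEq, div_le_div_iff₀ h1r h1r]
            nlinarith [pow_nonneg hr0.le L]
    have hrho : T.rho x x' ^ α = r ^ m := by
      rw [rho, if_neg hxe, ← Real.rpow_mul (by norm_num : (0:ℝ) ≤ 2), ← hm, hrpow m]
    rw [hrho]
    calc |f x - f x'| ≤ 2 * D * (r ^ m / (1 - r)) := hsum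
      _ = 2 * D / (1 - r) * r ^ m := by ring

end DyadicTree

end Parts

/-- (i) If `f ∈ Λ_α(X)` with constant `C` then
`|⟨f, ψ^l_k⟩| ≤ C·2^{−l(α+1/2)}` for every Haar function. (ii) Conversely, this coefficient
decay implies `f ∈ Λ_α(X)` with a constant depending only on `C` and `α`. -/
theorem haar_coefficient_characterization (α : ℝ) (hα : 0 < α) :
    (∀ (C : ℝ) (L : ℕ) (X : Type) [Fintype X] (T : DyadicTree X L) (f : X → ℝ),
      T.Holder α C f →
      ∀ l < L, ∀ k < 2 ^ l,
        |T.ip f (T.haar l k)| ≤ C * (2 : ℝ) ^ (-(l : ℝ) * (α + 1 / 2))) ∧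
    (∀ C : ℝ, ∃ C' : ℝ, ∀ (L : ℕ) (X : Type) [Fintype X]
        (T : DyadicTree X L) (f : X → ℝ),
      (∀ l < L, ∀ k < 2 ^ l,
        |T.ip f (T.haar l k)| ≤ C * (2 : ℝ) ^ (-(l : ℝ) * (α + 1 / 2))) →
      T.Holder α C' f) := by
  constructor
  · intro C L X _ T f hf l hl k hk
    exact T.holder_coeff hα hf hl hk
  · intro C
    refine ⟨2 * max C 0 / (1 - (2:ℝ) ^ (-α)), ?_⟩
    intro L X _ T f hf
    exact T.coeff_holder hα hf
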